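/- arXiv:math/9803056 — 6 statements merged into one kernel-verified Lean document; each statement's English description precedes it below -/
import Mathlib

section
/- If 2 ≤ j ≤ α, or j = 1 and ν₁ ≥ 3, then 2p_j + 2p_{j+1} < p₀. -/
/-- If `2 ≤ j ≤ α`, or `j = 1` and `ν 1 ≥ 3`, then `2 p j + 2 p (j+1) < p 0`,
where `p j` are the continued-fraction remainders of the rational `p 0 > 2` with
continued fraction data `ν₁, …, ν_α` (`ν 1 ≥ 2`). -/
theorem stmt_2 (α : ℤ) (hα : 1 ≤ α) (ν : ℤ → ℤ)
    (hν : ∀ j, 1 ≤ j → j ≤ α → 1 ≤ ν j) (hν1 : 2 ≤ ν 1)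
    (p : ℤ → ℚ) (hp0 : 2 < p 0) (hp1 : p 1 = 1)
    (hp : ∀ j, 2 ≤ j → j ≤ α + 1 → p j = p (j - 2) - ν (j - 1) * p (j - 1))
    (hpos : ∀ j, 1 ≤ j → j ≤ α → 0 < p j)
    (hdec : ∀ j, 1 ≤ j → j ≤ α → p (j + 1) < p j)
    (hend : p (α + 1) = 0) :
    ∀ j, ((2 ≤ j ∧ j ≤ α) ∨ (j = 1 ∧ 3 ≤ ν 1)) →
      2 * p j + 2 * p (j + 1) < p 0 := by
  have key : ∀ m : ℤ, 1 ≤ m → m ≤ α → p m ≤ 1 := by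
    refine Int.le_induction ?_ ?_
    · intro _; rw [hp1]
    · intro n hn ih h
      have h1 := hdec n hn (by omega)
      have h2 := ih (by omega)
      linarith
  intro j hj
  rcases hj with ⟨hj2, hjα⟩ | ⟨hj1, hν3⟩
  · -- recurrence at j+1 : p (j+1) = p (j-1) - ν j * p j
    have hrec := hp (j + 1) (by omega) (by omega)
    have e1 : j + 1 - 2 = j - 1 := by ring
    have e2 : j + 1 - 1 = j := by ring
    rw [e1, e2] at hrec
    have hνj : (1 : ℚ) ≤ (ν j : ℚ) := by exact_mod_cast hν j (by omega) hjα
    have hpj := hpos j (by omega) hjα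
    have hmul : p j ≤ (ν j : ℚ) * p j := le_mul_of_one_le_left hpj.le hνj
    have hle : p (j - 1) ≤ 1 := key (j - 1) (by omega) (by omega)
    linarith
  · subst hj1
    have hrec := hp 2 (by norm_num) (by omega)
    norm_num at hrec
    have h1 := hdec 1 (by norm_num) (by omega)
    have hν3' : (3 : ℚ) ≤ (ν 1 : ℚ) := by exact_mod_cast hν3
    norm_num at h1 ⊢
    rw [hp1] at hrec ⊢
    nlinarith
end

section
/- For 1 ≤ j ≤ m_α, one has ⌊(n_j − 1)/p₀⌋ = w_j + δ_{j,m₁}, where n_j are the Takahashi–Suzuki numbers and w_j their z-analogue. -/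
lemma auxKey (α : ℤ) (ν : ℤ → ℤ) (p : ℤ → ℚ) (hp1 : p 1 = 1)
    (hp : ∀ j : ℤ, 2 ≤ j → j ≤ α + 1 → p j = p (j - 2) - ν (j - 1) * p (j - 1))
    (y z : ℤ → ℤ) (hym1 : y (-1) = 0) (hy0 : y 0 = 1)
    (hy : ∀ j : ℤ, 1 ≤ j → j ≤ α → y j = y (j - 2) + ν j * y (j - 1))
    (hzm1 : z (-1) = 1) (hz0 : z 0 = 0)
    (hz : ∀ j : ℤ, 1 ≤ j → j ≤ α → z j = z (j - 2) + ν j * z (j - 1)) :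
    ∀ k : ℕ, (k : ℤ) ≤ α + 1 →
      (y ((k : ℤ) - 1) : ℚ) - (z ((k : ℤ) - 1) : ℚ) * p 0
        = (-1 : ℚ) ^ (k + 1) * p (k : ℤ) := by
  intro k
  induction k using Nat.strong_induction_on with
  | _ k ih =>
    match k with
    | 0 => intro _; norm_num [hym1, hzm1]
    | 1 => intro _; norm_num [hy0, hz0, hp1]
    | (k+2) =>
      intro hk
      have hk' : ((k : ℤ) + 2) ≤ α + 1 := by exact_mod_cast hk
      have h1α : (1:ℤ) ≤ (k:ℤ) + 1 := by omega
      have h2α : (k:ℤ) + 1 ≤ α := by linarith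
      have ey := hy ((k:ℤ)+1) h1α h2α
      have ez := hz ((k:ℤ)+1) h1α h2α
      have ep := hp ((k:ℤ)+2) (by linarith [Int.ofNat_nonneg k]) (by linarith)
      rw [show (k:ℤ)+1-2 = (k:ℤ)-1 by ring, show (k:ℤ)+1-1 = (k:ℤ) by ring] at ey ez
      rw [show (k:ℤ)+2-2 = (k:ℤ) by ring, show (k:ℤ)+2-1 = (k:ℤ)+1 by ring] at ep
      have e1 := ih k (by omega) (by linarith)
      have e2 := ih (k+1) (by omega) (by push_cast; linarith)
      push_cast at e2 ⊢
      rw [add_sub_cancel_right] at e2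
      rw [show (k:ℤ)+2-1 = (k:ℤ)+1 by ring, ey, ez, ep]
      push_cast
      linear_combination e1 + (ν ((k:ℤ)+1) : ℚ) * e2

lemma auxPlt (α : ℤ) (hα : 1 ≤ α) (p : ℤ → ℚ) (hp1 : p 1 = 1)
    (hdec : ∀ j : ℤ, 1 ≤ j → j ≤ α → p (j + 1) < p j) :
    ∀ r : ℤ, 2 ≤ r → r ≤ α → p r < 1 := by
  refine Int.le_induction ?_ ?_
  · intro h
    have := hdec 1 le_rfl hα
    norm_num at this
    linarith [hp1]
  · intro n hn ih h
    have h1 : p (n+1) < p n := hdec n (by linarith) (by linarith)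
    have := ih (by linarith)
    linarith

lemma auxM (α : ℤ) (ν : ℤ → ℤ) (hν : ∀ j : ℤ, 1 ≤ j → j ≤ α → 1 ≤ ν j)
    (m : ℤ → ℤ) (hm : ∀ r : ℤ, 1 ≤ r → r ≤ α → m r = m (r - 1) + ν r) :
    ∀ a b : ℤ, 0 ≤ a → a < b → b ≤ α → m a < m b := by
  intro a b ha hab hbα
  have H : ∀ b : ℤ, a + 1 ≤ b → (b ≤ α → m a < m b) := by
    refine Int.le_induction ?_ ?_
    · intro hb
      have e := hm (a+1) (by linarith) hb
      rw [show a+1-1 = a by ring] at e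
      have := hν (a+1) (by linarith) hb
      omega
    · intro n hn ih hb
      have e := hm (n+1) (by linarith) hb
      rw [show n+1-1 = n by ring] at e
      have := hν (n+1) (by linarith) hb
      have := ih (by linarith)
      omega
  exact H b hab hbα



/-- For `1 ≤ j ≤ m α`, one has `⌊(n j - 1) / p 0⌋ = w j + δ_{j, m 1}`, where
`n j = y (r-1) + (j - m r) * y r` are the Takahashi–Suzuki numbers and
`w j = z (r-1) + (j - m r) * z r - 1` their `z`-analogue, for `m r ≤ j < m (r+1)`
(with `j ≤ m α`, so for `r = α` only `j = m α` occurs).  Here `p 0 > 2` is rational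
with continued fraction data `ν₁, …, ν_α` encoded by the remainder recursion, and
`y`, `z` are the convergent sequences. -/
theorem stmt_6 (α : ℤ) (hα : 1 ≤ α) (ν : ℤ → ℤ)
    (hν : ∀ j, 1 ≤ j → j ≤ α → 1 ≤ ν j) (hν1 : 2 ≤ ν 1)
    (p : ℤ → ℚ) (hp0 : 2 < p 0) (hp1 : p 1 = 1)
    (hp : ∀ j, 2 ≤ j → j ≤ α + 1 → p j = p (j - 2) - ν (j - 1) * p (j - 1))
    (hpos : ∀ j, 1 ≤ j → j ≤ α → 0 < p j)
    (hdec : ∀ j, 1 ≤ j → j ≤ α → p (j + 1) < p j)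
    (hend : p (α + 1) = 0)
    (m : ℤ → ℤ) (hm0 : m 0 = 0)
    (hm : ∀ r, 1 ≤ r → r ≤ α → m r = m (r - 1) + ν r)
    (y z : ℤ → ℤ)
    (hym1 : y (-1) = 0) (hy0 : y 0 = 1)
    (hy : ∀ j, 1 ≤ j → j ≤ α → y j = y (j - 2) + ν j * y (j - 1))
    (hzm1 : z (-1) = 1) (hz0 : z 0 = 0)
    (hz : ∀ j, 1 ≤ j → j ≤ α → z j = z (j - 2) + ν j * z (j - 1))
    (n w : ℤ → ℤ)
    (hnw : ∀ r j, 0 ≤ r → r ≤ α → m r ≤ j → (r < α → j < m (r + 1)) → j ≤ m α →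
      n j = y (r - 1) + (j - m r) * y r ∧ w j = z (r - 1) + (j - m r) * z r - 1) :
    ∀ j, 1 ≤ j → j ≤ m α →
      ⌊((n j : ℚ) - 1) / p 0⌋ = w j + (if j = m 1 then 1 else 0) := by
  classical
  intro j hj1 hjα
  have hp0' : (0:ℚ) < p 0 := by linarith
  have hmono := auxM α ν hν m hm
  -- existence of maximal r
  have hex : ∃ r : ℤ, 0 ≤ r ∧ r ≤ α ∧ m r ≤ j ∧ (r < α → j < m (r + 1)) := by
    set S : Finset ℤ := (Finset.Icc 0 α).filter (fun r => m r ≤ j) with hS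
    have h0S : (0:ℤ) ∈ S := by
      simp only [hS, Finset.mem_filter, Finset.mem_Icc]
      exact ⟨⟨le_rfl, by linarith⟩, by rw [hm0]; linarith⟩
    have hne : S.Nonempty := ⟨0, h0S⟩
    have hmem := S.max'_mem hne
    simp only [hS, Finset.mem_filter, Finset.mem_Icc] at hmem
    refine ⟨S.max' hne, hmem.1.1, hmem.1.2, hmem.2, ?_⟩
    intro hlt
    by_contra hcon
    push_neg at hcon
    have : S.max' hne + 1 ∈ S := by
      simp only [hS, Finset.mem_filter, Finset.mem_Icc]
      exact ⟨⟨by linarith [hmem.1.1], by linarith⟩, hcon⟩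
    have := S.le_max' _ this
    linarith
  obtain ⟨r, hr0, hrα, hmrj, hnext⟩ := hex
  obtain ⟨k, rfl⟩ := Int.eq_ofNat_of_zero_le hr0
  obtain ⟨hn, hw⟩ := hnw (k:ℤ) j hr0 hrα hmrj hnext hjα
  -- sign identities
  have hE1 := auxKey α ν p hp1 hp y z hym1 hy0 hy hzm1 hz0 hz k (by linarith)
  have hE2 := auxKey α ν p hp1 hp y z hym1 hy0 hy hzm1 hz0 hz (k+1) (by push_cast; linarith)
  push_cast at hE2
  rw [add_sub_cancel_right] at hE2
  rw [pow_succ] at hE2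
  set s : ℚ := (-1:ℚ)^(k+1) with hs_def
  set q : ℚ := p (k:ℤ) - ((j:ℚ) - (m (k:ℤ) : ℚ)) * p ((k:ℤ)+1) with hq_def
  have hnQ : (n j : ℚ) = (y ((k:ℤ) - 1) : ℚ) + ((j:ℚ) - (m (k:ℤ):ℚ)) * (y (k:ℤ) : ℚ) := by
    exact_mod_cast congrArg (fun x : ℤ => (x : ℚ)) hn
  have hwQ : (w j : ℚ) = (z ((k:ℤ) - 1) : ℚ) + ((j:ℚ) - (m (k:ℤ):ℚ)) * (z (k:ℤ) : ℚ) - 1 := by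
    exact_mod_cast congrArg (fun x : ℤ => (x : ℚ)) hw
  have key : (n j : ℚ) - 1 = ((w j : ℚ) + 1) * p 0 + s * q - 1 := by
    rw [hnQ, hwQ, hq_def]
    linear_combination hE1 + ((j:ℚ) - (m (k:ℤ):ℚ)) * hE2
  -- t = 0 when r = α
  have htα : (k:ℤ) = α → j = m (k:ℤ) := by
    intro h; rw [h] at hmrj ⊢; omega
  -- bounds on t when r < α
  have htub : (k:ℤ) < α → j - m (k:ℤ) ≤ ν ((k:ℤ)+1) - 1 := by
    intro h
    have hlt := hnext h
    have e := hm ((k:ℤ)+1) (by omega) (by omega)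
    rw [show (k:ℤ)+1-1 = (k:ℤ) by ring] at e
    omega
  -- q > 0
  have hqpos : 0 < q := by
    rcases eq_or_lt_of_le hrα with hKα | hKα
    · have ht : j = m (k:ℤ) := htα hKα
      have : ((j:ℚ) - (m (k:ℤ):ℚ)) = 0 := by rw [ht]; ring
      rw [hq_def, this]
      have : 0 < p (k:ℤ) := hpos _ (by omega) (by omega)
      linarith
    · have e2 := hp ((k:ℤ)+2) (by omega) (by omega)
      rw [show (k:ℤ)+2-2 = (k:ℤ) by ring, show (k:ℤ)+2-1 = (k:ℤ)+1 by ring] at e2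
      have hP2 : 0 ≤ p ((k:ℤ)+2) := by
        rcases eq_or_lt_of_le (show (k:ℤ)+1 ≤ α by omega) with h | h
        · rw [show (k:ℤ)+2 = α+1 by omega, hend]
        · exact le_of_lt (hpos _ (by omega) (by omega))
      have hP1 : 0 < p ((k:ℤ)+1) := hpos _ (by omega) (by omega)
      have htQ : ((j:ℚ) - (m (k:ℤ):ℚ)) ≤ (ν ((k:ℤ)+1):ℚ) - 1 := by
        exact_mod_cast htub hKα
      rw [hq_def]
      nlinarith [e2, hP2, hP1, htQ]
  -- q ≤ p r
  have hqub : q ≤ p (k:ℤ) := by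
    rcases eq_or_lt_of_le hrα with hKα | hKα
    · have ht : j = m (k:ℤ) := htα hKα
      have : ((j:ℚ) - (m (k:ℤ):ℚ)) = 0 := by rw [ht]; ring
      rw [hq_def, this]; ring_nf; exact le_rfl
    · have hP1 : 0 < p ((k:ℤ)+1) := hpos _ (by omega) (by omega)
      have htQ : (0:ℚ) ≤ (j:ℚ) - (m (k:ℤ):ℚ) := by
        have : (0:ℤ) ≤ j - m (k:ℤ) := by omega
        exact_mod_cast this
      rw [hq_def]
      nlinarith
  by_cases hj1' : j = m 1
  · -- r = 1 case
    have hK1 : (k:ℤ) = 1 := by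
      rcases lt_trichotomy (k:ℤ) 1 with h | h | h
      · exfalso
        have hk0 : (k:ℤ) = 0 := by omega
        have := hnext (by omega)
        rw [hk0] at this
        norm_num at this
        omega
      · exact h
      · exfalso
        have := hmono 1 (k:ℤ) (by norm_num) h hrα
        omega
    have hk1 : k = 1 := by exact_mod_cast hK1
    subst hk1
    have hs1 : s = 1 := by norm_num [hs_def]
    have hq1 : q = 1 := by
      have ht : ((j:ℚ) - (m ((1:ℕ):ℤ):ℚ)) = 0 := by
        rw [show ((1:ℕ):ℤ) = 1 by norm_num, ← hj1']; ring
      rw [hq_def, ht, show ((1:ℕ):ℤ) = 1 by norm_num, hp1]; ring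
    rw [if_pos hj1']
    have hx : (n j : ℚ) - 1 = ((w j + 1 : ℤ) : ℚ) * p 0 := by
      push_cast
      rw [key, hs1, hq1]; ring
    rw [hx, mul_div_cancel_right₀ _ (ne_of_gt hp0'), Int.floor_intCast]
  · -- j ≠ m 1
    rw [if_neg hj1', add_zero]
    have hbounds : -(p 0) ≤ s * q - 1 ∧ s * q - 1 < 0 := by
      rcases Nat.even_or_odd k with hk | hk
      · -- k even, s = -1
        have hs1 : s = -1 := by rw [hs_def]; exact Odd.neg_one_pow (Even.add_one hk)
        have hqub2 : q ≤ p 0 - 1 := by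
          by_cases hk0 : k = 0
          · subst hk0
            have hjQ : (1:ℚ) ≤ (j:ℚ) := by exact_mod_cast hj1
            have hmQ : ((m ((0:ℕ):ℤ)):ℚ) = 0 := by
              rw [show ((0:ℕ):ℤ) = 0 by norm_num, hm0]; norm_num
            rw [hq_def, hmQ, show ((0:ℕ):ℤ) = 0 by norm_num, show (0:ℤ)+1 = 1 by ring, hp1]
            linarith
          · obtain ⟨t, rfl⟩ := hk
            have h2 : (2:ℤ) ≤ ((t+t:ℕ):ℤ) := by push_cast; omega
            have := auxPlt α hα p hp1 hdec _ h2 hrα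
            linarith
        constructor
        · rw [hs1]; linarith
        · rw [hs1]; nlinarith
      · -- k odd, s = 1
        have hs1 : s = 1 := by rw [hs_def]; exact Even.neg_one_pow (Odd.add_one hk)
        have hqlt : q < 1 := by
          by_cases hk1 : k = 1
          · subst hk1
            have hKlt : ((1:ℕ):ℤ) < α := by
              rcases eq_or_lt_of_le hrα with h | h
              · exfalso
                have := htα h
                rw [show ((1:ℕ):ℤ) = 1 by norm_num] at this
                exact hj1' this
              · exact h
            have hP2 : 0 < p ((1:ℤ) + 1) := by rw [show (1:ℤ)+1 = 2 by norm_num]; exact hpos 2 (by norm_num) (by omega)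
            have ht1 : (1:ℚ) ≤ (j:ℚ) - (m ((1:ℕ):ℤ):ℚ) := by
              have h0 : m ((1:ℕ):ℤ) ≤ j := hmrj
              have h1 : j ≠ m ((1:ℕ):ℤ) := by
                rw [show ((1:ℕ):ℤ) = 1 by norm_num]; exact hj1'
              have : (1:ℤ) ≤ j - m ((1:ℕ):ℤ) := by omega
              exact_mod_cast this
            rw [hq_def, show ((1:ℕ):ℤ) = 1 by norm_num, hp1] at *
            nlinarith
          · have h2 : (2:ℤ) ≤ (k:ℤ) := by
              have : k ≠ 0 := by rintro rfl; simp at hk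
              omega
            have := auxPlt α hα p hp1 hdec (k:ℤ) h2 hrα
            linarith
        constructor
        · rw [hs1]; linarith
        · rw [hs1]; linarith
    obtain ⟨hb1, hb2⟩ := hbounds
    rw [Int.floor_eq_iff]
    constructor
    · rw [le_div_iff₀ hp0']
      linarith [key]
    · rw [div_lt_iff₀ hp0']
      push_cast
      linarith [key]
end

section
/- For a Takahashi–Suzuki number n_j and 1 ≤ k ≤ n_j − 1, the conditions (−1)^{w_j} sin(πk/p₀) sin(π(n_j − k)/p₀) > 0 and ⌊k/p₀⌋ + ⌊(n_j − k)/p₀⌋ = ⌊(n_j − 1)/p₀⌋ are equivalent. -/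
open Real

lemma sin_sign_aux (y : ℝ) (hy : ∀ m : ℤ, y ≠ m) :
    0 < (-1 : ℝ) ^ ⌊y⌋ * Real.sin (π * y) := by
  have hf0 : Int.fract y ≠ 0 := by
    intro h
    apply hy ⌊y⌋
    rw [Int.fract] at h
    linarith
  have hfpos : 0 < Int.fract y := lt_of_le_of_ne (Int.fract_nonneg y) (Ne.symm hf0)
  have hflt : Int.fract y < 1 := Int.fract_lt_one y
  have h1 : π * y = π * Int.fract y + (⌊y⌋ : ℝ) * π := by rw [Int.fract]; ring
  rw [h1, Real.sin_add_int_mul_pi]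
  have hs : 0 < Real.sin (π * Int.fract y) :=
    Real.sin_pos_of_pos_of_lt_pi (by positivity)
      (by nlinarith [Real.pi_pos])
  have hpow : ((-1 : ℝ) ^ ⌊y⌋) * ((-1 : ℝ) ^ ⌊y⌋) = 1 := by
    rw [← zpow_add₀ (by norm_num : (-1:ℝ) ≠ 0)]
    exact Even.neg_one_zpow ⟨⌊y⌋, by ring⟩
  calc (0:ℝ) < Real.sin (π * Int.fract y) := hs
    _ = (-1 : ℝ) ^ ⌊y⌋ * ((-1 : ℝ) ^ ⌊y⌋ * Real.sin (π * Int.fract y)) := by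
        rw [← mul_assoc, hpow, one_mul]

lemma neg_one_zpow_pos_iff (z : ℤ) : 0 < (-1 : ℝ) ^ z ↔ Even z := by
  rcases Int.even_or_odd z with h | h
  · simp [h.neg_one_zpow, h]
  · rw [h.neg_one_zpow]
    simp [Int.even_iff, Int.odd_iff.mp h]

/-- For an integer `n` such that `p₀` divides no `k` with `1 ≤ k ≤ n - 1` (as holds
for Takahashi–Suzuki numbers `n = n_j`), and an integer `w` with
`(-1)^w = (-1)^⌊(n-1)/p₀⌋` (the parity of the TS string), the conditions
`(-1)^w sin(πk/p₀) sin(π(n-k)/p₀) > 0` and `⌊k/p₀⌋ + ⌊(n-k)/p₀⌋ = ⌊(n-1)/p₀⌋`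
are equivalent for each `1 ≤ k ≤ n - 1`. -/
theorem stmt_7 (p₀ : ℝ) (hp₀ : 2 < p₀) (n : ℤ) (hn : 2 ≤ n) (w : ℤ)
    (hnd : ∀ k : ℤ, 1 ≤ k → k ≤ n - 1 → ¬ ∃ t : ℤ, (k : ℝ) = t * p₀)
    (hw : (-1 : ℝ) ^ w = (-1 : ℝ) ^ ⌊((n : ℝ) - 1) / p₀⌋) :
    ∀ k : ℤ, 1 ≤ k → k ≤ n - 1 →
      (0 < (-1 : ℝ) ^ w * Real.sin (π * k / p₀) * Real.sin (π * ((n : ℝ) - k) / p₀)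
        ↔ ⌊(k : ℝ) / p₀⌋ + ⌊((n : ℝ) - k) / p₀⌋ = ⌊((n : ℝ) - 1) / p₀⌋) := by
  intro k hk1 hk2
  have hp₀0 : (0:ℝ) < p₀ := by linarith
  have hna : ∀ m : ℤ, (k : ℝ) / p₀ ≠ m := by
    intro m hm
    refine hnd k hk1 hk2 ⟨m, ?_⟩
    field_simp at hm
    linarith
  have hnb : ∀ m : ℤ, ((n : ℝ) - k) / p₀ ≠ m := by
    intro m hm
    refine hnd (n - k) (by omega) (by omega) ⟨m, ?_⟩
    push_cast
    field_simp at hm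
    linarith
  set A := ⌊(k : ℝ) / p₀⌋ with hA
  set B := ⌊((n : ℝ) - k) / p₀⌋ with hB
  set M := ⌊((n : ℝ) - 1) / p₀⌋ with hM
  have hsa := sin_sign_aux _ hna
  have hsb := sin_sign_aux _ hnb
  rw [show π * ((k:ℝ)/p₀) = π * k / p₀ by ring] at hsa
  rw [show π * (((n:ℝ)-k)/p₀) = π * ((n:ℝ)-k) / p₀ by ring] at hsb
  -- bounds on A + B
  have hsum : (k : ℝ) / p₀ + ((n : ℝ) - k) / p₀ = (n : ℝ) / p₀ := by ring
  have hub : A + B ≤ ⌊(n : ℝ) / p₀⌋ := by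
    rw [hA, hB, ← hsum]
    exact Int.le_floor_add _ _
  have hlb : ⌊(n : ℝ) / p₀⌋ - 1 ≤ A + B := by
    have := Int.le_floor_add_floor ((k:ℝ)/p₀) (((n:ℝ)-k)/p₀)
    rw [hsum] at this
    exact this
  have hmono : M ≤ ⌊(n : ℝ) / p₀⌋ := by
    apply Int.floor_le_floor
    gcongr
    linarith
  have hmono2 : ⌊(n : ℝ) / p₀⌋ ≤ M + 1 := by
    have h1 : ((n:ℝ) - 1) / p₀ < (M : ℝ) + 1 := Int.lt_floor_add_one _
    have h2 : (1:ℝ) / p₀ < 1 := by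
      rw [div_lt_one hp₀0]; linarith
    have h3 : (n : ℝ) / p₀ < (M : ℝ) + 2 := by
      have h4 : (n : ℝ) / p₀ = ((n:ℝ) - 1) / p₀ + 1 / p₀ := by ring
      rw [h4]; linarith
    have h5 : ⌊(n : ℝ) / p₀⌋ < M + 2 := Int.floor_lt.mpr (by push_cast; linarith)
    omega
  -- rewrite sins in terms of positive constants
  set ca := (-1 : ℝ) ^ A * Real.sin (π * k / p₀) with hca
  set cb := (-1 : ℝ) ^ B * Real.sin (π * ((n:ℝ) - k) / p₀) with hcb
  have hsq : ∀ z : ℤ, ((-1 : ℝ) ^ z) * ((-1 : ℝ) ^ z) = 1 := by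
    intro z
    rw [← zpow_add₀ (by norm_num : (-1:ℝ) ≠ 0)]
    exact Even.neg_one_zpow ⟨z, by ring⟩
  have hsina : Real.sin (π * k / p₀) = (-1 : ℝ) ^ A * ca := by
    rw [hca, ← mul_assoc, hsq, one_mul]
  have hsinb : Real.sin (π * ((n:ℝ) - k) / p₀) = (-1 : ℝ) ^ B * cb := by
    rw [hcb, ← mul_assoc, hsq, one_mul]
  rw [hsina, hsinb, hw]
  have key : (-1 : ℝ) ^ M * ((-1 : ℝ) ^ A * ca) * ((-1 : ℝ) ^ B * cb)
      = (-1 : ℝ) ^ (M + A + B) * (ca * cb) := by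
    rw [zpow_add₀ (by norm_num : (-1:ℝ) ≠ 0), zpow_add₀ (by norm_num : (-1:ℝ) ≠ 0)]
    ring
  rw [key]
  have hcab : 0 < ca * cb := mul_pos hsa hsb
  constructor
  · intro h
    have hpos : 0 < (-1 : ℝ) ^ (M + A + B) := by
      rcases mul_pos_iff.mp h with ⟨h1, _⟩ | ⟨_, h2⟩
      · exact h1
      · linarith
    have heven : Even (M + A + B) := (neg_one_zpow_pos_iff _).mp hpos
    rw [Int.even_iff] at heven
    omega
  · intro h
    have heven : Even (M + A + B) := by rw [Int.even_iff]; omega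
    exact mul_pos ((neg_one_zpow_pos_iff _).mpr heven) hcab
end

section
/- lim_{N→∞} ( (φ(v + i u_N − i)φ(v − i u_N + i)) / (φ(v + i u_N + i)φ(v − i u_N − i)) ) = exp( Jβ / cosh(πv/2) ), where φ(v) = (sinh(πv/4)/ sin(π/2))^{N/2} and u_N = −2βJ/(πN), specializing θ = π/2. -/
open Filter

/-- Free fermion case `θ = π/2`: `φ_N(v) = (sinh(πv/4)/sin(π/2))^{N/2}`. -/
noncomputable def phiFF (N : ℕ) (v : ℂ) : ℂ :=
  (Complex.sinh ((Real.pi / 4 : ℂ) * v) / (Real.sin (Real.pi / 2) : ℂ)) ^ (N / 2)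

lemma sinh_mul_sinh' (a b : ℂ) : Complex.sinh a * Complex.sinh b
    = (Complex.cosh (a+b) - Complex.cosh (a-b))/2 := by
  rw [Complex.cosh_add, Complex.cosh_sub]; ring

lemma prod_phi (N : ℕ) (v t : ℝ) :
    phiFF N ((v:ℂ) + Complex.I * (t:ℂ)) * phiFF N ((v:ℂ) - Complex.I * (t:ℂ))
      = ((((Real.cosh (Real.pi * v / 2) : ℝ) : ℂ)
          - ((Real.cos (Real.pi * t / 2) : ℝ) : ℂ)) / 2) ^ (N/2) := by
  unfold phiFF
  rw [Real.sin_pi_div_two]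
  push_cast
  rw [div_one, div_one, ← mul_pow]
  congr 1
  rw [sinh_mul_sinh']
  have h1 : (Real.pi : ℂ)/4 * ((v:ℂ) + Complex.I * t) + (Real.pi:ℂ)/4 * ((v:ℂ) - Complex.I * t)
      = ((Real.pi * v / 2 : ℝ) : ℂ) := by push_cast; ring
  have h2 : (Real.pi : ℂ)/4 * ((v:ℂ) + Complex.I * t) - (Real.pi:ℂ)/4 * ((v:ℂ) - Complex.I * t)
      = ((Real.pi * t / 2 : ℝ) : ℂ) * Complex.I := by push_cast; ring
  rw [h1, h2, Complex.cosh_mul_I, ← Complex.ofReal_cosh, ← Complex.ofReal_cos]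
  push_cast
  ring

lemma half_div_tendsto : Tendsto (fun N : ℕ => ((N/2 : ℕ):ℝ)/(N:ℝ)) atTop (nhds (1/2)) := by
  have heq : ∀ᶠ N : ℕ in atTop, 1/2 - ((N % 2 : ℕ):ℝ)/(2*N) = ((N/2 : ℕ):ℝ)/(N:ℝ) := by
    filter_upwards [eventually_ge_atTop 1] with N hN
    have hN0 : (N:ℝ) ≠ 0 := Nat.cast_ne_zero.mpr (by omega)
    have h : 2*((N/2:ℕ):ℝ) + ((N%2:ℕ):ℝ) = (N:ℝ) := by exact_mod_cast Nat.div_add_mod N 2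
    field_simp
    linear_combination (-1:ℝ) * h
  have h2 : Tendsto (fun N : ℕ => ((N % 2 : ℕ):ℝ)/(2*N)) atTop (nhds 0) := by
    apply squeeze_zero (g := fun N : ℕ => 1/(2*(N:ℝ))) (fun N => by positivity)
    · intro N
      rcases Nat.eq_zero_or_pos N with h | h
      · simp [h]
      · have hpos : (0:ℝ) < 2*N := by positivity
        gcongr
        have : N % 2 ≤ 1 := by omega
        exact_mod_cast this
    · have h := tendsto_const_div_atTop_nhds_zero_nat (1/2 : ℝ)
      refine h.congr fun n => ?_
      rw [div_div]
  have := (tendsto_const_nhds (x := (1/2:ℝ)) (f := atTop (α := ℕ))).sub h2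
  rw [sub_zero] at this
  exact this.congr' heq

lemma T_lemma (b c : ℝ) (hc : 1 ≤ c) :
    Tendsto (fun N : ℕ => ((N/2 : ℕ):ℝ) *
      (Real.log (c - Real.sin (-b/N)) - Real.log (c + Real.sin (-b/N))))
      atTop (nhds (b/c)) := by
  set g : ℝ → ℝ := fun x => Real.log (c - Real.sin x) - Real.log (c + Real.sin x) with hgdef
  have hc0 : (0:ℝ) < c := lt_of_lt_of_le one_pos hc
  by_cases hb : b = 0
  · subst hb
    simp [g]
  -- derivative of g at 0
  have h1 : HasDerivAt (fun x => c - Real.sin x) (-1) 0 := by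
    simpa using (Real.hasDerivAt_sin 0).const_sub c
  have h2 : HasDerivAt (fun x => c + Real.sin x) 1 0 := by
    simpa using (Real.hasDerivAt_sin 0).const_add c
  have hg : HasDerivAt g (-2/c) 0 := by
    have l1 := h1.log (by simpa using hc0.ne')
    have l2 := h2.log (by simpa using hc0.ne')
    have := l1.sub l2
    convert this using 1
    iterate 3 rfl
    simp
    ring
  rw [hasDerivAt_iff_tendsto_slope] at hg
  -- x N tends to 0 within ≠ 0
  have hx : Tendsto (fun N : ℕ => -b/(N:ℝ)) atTop (nhds 0) :=
    tendsto_const_div_atTop_nhds_zero_nat (-b)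
  have hx' : Tendsto (fun N : ℕ => -b/(N:ℝ)) atTop (nhdsWithin 0 {0}ᶜ) := by
    rw [tendsto_nhdsWithin_iff]
    refine ⟨hx, ?_⟩
    filter_upwards [eventually_ge_atTop 1] with N hN
    have hN0 : (N:ℝ) ≠ 0 := Nat.cast_ne_zero.mpr (by omega)
    simp only [Set.mem_compl_iff, Set.mem_singleton_iff]
    exact div_ne_zero (neg_ne_zero.mpr hb) hN0
  have hslope : Tendsto (fun N : ℕ => g (-b/(N:ℝ)) / (-b/(N:ℝ))) atTop (nhds (-2/c)) := by
    have := hg.comp hx'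
    refine this.congr fun N => ?_
    have : g 0 = 0 := by simp [g]
    simp [Function.comp, slope_def_field, this]
  have hMx : Tendsto (fun N : ℕ => ((N/2 : ℕ):ℝ) * (-b/(N:ℝ))) atTop (nhds (-b * (1/2))) := by
    have := half_div_tendsto.const_mul (-b)
    refine this.congr fun N => ?_
    ring
  have := hslope.mul hMx
  have heq : (-2/c) * (-b * (1/2)) = b/c := by ring
  rw [heq] at this
  refine this.congr' ?_
  filter_upwards [eventually_ge_atTop 1] with N hN
  have hN0 : (N:ℝ) ≠ 0 := Nat.cast_ne_zero.mpr (by omega)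
  have hx0 : -b/(N:ℝ) ≠ 0 := div_ne_zero (neg_ne_zero.mpr hb) hN0
  field_simp
  ring

/-- With `u N = -2βJ/(πN)` (i.e. `u_N = -βJ sin θ/(θN)` at `θ = π/2`) and
`X(u,v) = φ(v+i(u-1))φ(v-i(u-1)) / (φ(v+i(u+1))φ(v-i(u+1)))`, one has
`lim_{N→∞} X(u_N, v) = exp(Jβ / cosh(πv/2))` for real `v`. -/
theorem stmt_11 (J β : ℝ) (v : ℝ) (u : ℕ → ℝ)
    (hu : ∀ N : ℕ, u N = -(2 * β * J) / (Real.pi * N)) :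
    Tendsto (fun N : ℕ =>
        phiFF N ((v : ℂ) + Complex.I * ((u N : ℂ) - 1)) *
          phiFF N ((v : ℂ) - Complex.I * ((u N : ℂ) - 1)) /
        (phiFF N ((v : ℂ) + Complex.I * ((u N : ℂ) + 1)) *
          phiFF N ((v : ℂ) - Complex.I * ((u N : ℂ) + 1))))
      atTop
      (nhds (Complex.exp ((J * β / Real.cosh (Real.pi * v / 2) : ℝ) : ℂ))) := by
  set c : ℝ := Real.cosh (Real.pi * v / 2) with hcdef
  have hc : 1 ≤ c := Real.one_le_cosh _
  set b : ℝ := β * J with hbdef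
  -- the exponential form tends to the limit
  have F : Tendsto (fun N : ℕ =>
      ((Real.exp (((N/2 : ℕ):ℝ) *
        (Real.log (c - Real.sin (-b/N)) - Real.log (c + Real.sin (-b/N)))) : ℝ) : ℂ))
      atTop (nhds ((Real.exp (b/c) : ℝ) : ℂ)) :=
    Complex.continuous_ofReal.continuousAt.tendsto.comp
      ((Real.continuous_exp.continuousAt.tendsto).comp (T_lemma b c hc))
  have hlim : ((Real.exp (b/c) : ℝ) : ℂ) = Complex.exp ((J * β / c : ℝ) : ℂ) := by
    rw [Complex.ofReal_exp]
    congr 2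
    rw [hbdef]; ring
  rw [hlim] at F
  refine F.congr' ?_
  -- eventual equality
  have hx : Tendsto (fun N : ℕ => -b/(N:ℝ)) atTop (nhds 0) :=
    tendsto_const_div_atTop_nhds_zero_nat (-b)
  have hs0 : Tendsto (fun N : ℕ => Real.sin (-b/(N:ℝ))) atTop (nhds 0) := by
    have := (Real.continuous_sin.continuousAt.tendsto).comp hx
    simpa [Function.comp_def] using this
  filter_upwards [eventually_ge_atTop 1,
    hs0.eventually (eventually_lt_nhds (by norm_num : (0:ℝ) < 1)),
    hs0.eventually (eventually_gt_nhds (by norm_num : (-1:ℝ) < 0))] with N hN1 hlt hgt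
  have hN0 : (N:ℝ) ≠ 0 := Nat.cast_ne_zero.mpr (by omega)
  set s : ℝ := Real.sin (-b/(N:ℝ)) with hsdef
  have hpos1 : 0 < c - s := by linarith
  have hpos2 : 0 < c + s := by linarith
  have hu' : Real.pi * u N / 2 = -b/(N:ℝ) := by
    rw [hu, hbdef]
    field_simp
  have e1 : ((u N : ℂ) - 1) = ((u N - 1 : ℝ) : ℂ) := by push_cast; ring
  have e2 : ((u N : ℂ) + 1) = ((u N + 1 : ℝ) : ℂ) := by push_cast; ring
  have c1 : Real.cos (Real.pi * (u N - 1)/2) = s := by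
    have h : Real.pi * (u N - 1)/2 = Real.pi * u N/2 - Real.pi/2 := by ring
    rw [h, Real.cos_sub, Real.cos_pi_div_two, Real.sin_pi_div_two, hu']
    simp [hsdef]
  have c2 : Real.cos (Real.pi * (u N + 1)/2) = -s := by
    have h : Real.pi * (u N + 1)/2 = Real.pi * u N/2 + Real.pi/2 := by ring
    rw [h, Real.cos_add, Real.cos_pi_div_two, Real.sin_pi_div_two, hu']
    simp [hsdef]
  -- real-side exponential identity
  have key : ((c - s)/(c + s) : ℝ) ^ (N/2)
      = Real.exp (((N/2 : ℕ):ℝ) * (Real.log (c - s) - Real.log (c + s))) := by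
    rw [← Real.log_div hpos1.ne' hpos2.ne', Real.exp_nat_mul,
      Real.exp_log (div_pos hpos1 hpos2)]
  rw [e1, e2, prod_phi, prod_phi, c1, c2, ← hcdef, ← key]
  have hne : ((c + s : ℝ) : ℂ) ≠ 0 := Complex.ofReal_ne_zero.mpr hpos2.ne'
  push_cast
  rw [← div_pow]
  congr 1
  have h2 : (2:ℂ) ≠ 0 := two_ne_zero
  field_simp
  ring
end

section
/- Defining Y_j(v) = T_{j+1}(v) T_{j−1}(v) / (T₀(v+i(j+1)) T₀(v−i(j+1))) from a family satisfying the T-system, one has 1 + Y_j(v) = T_j(v+i) T_j(v−i) / (T₀(v+i(j+1)) T₀(v−i(j+1))), and the Y-system Y_j(v+i) Y_j(v−i) = (1+Y_{j−1}(v))(1+Y_{j+1}(v)) holds. -/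
/-- Let `T n : ℂ → ℂ` (`n ≥ -1`) satisfy `T (-1) = 0` and the `y = 1` T-system
`T n (v+i) T n (v-i) = T (n+1) v ⬝ T (n-1) v + T 0 (v+i(n+1)) T 0 (v-i(n+1))`
for all `n ≥ 0`, with `T 0` nowhere zero.  Define
`Y j v = T (j+1) v ⬝ T (j-1) v / (T 0 (v+i(j+1)) T 0 (v-i(j+1)))`.  Then for `j ≥ 1`:
`1 + Y j v = T j (v+i) T j (v-i) / (T 0 (v+i(j+1)) T 0 (v-i(j+1)))`, and the
Y-system `Y j (v+i) Y j (v-i) = (1 + Y (j-1) v)(1 + Y (j+1) v)` holds. -/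
theorem stmt_16 (T : ℤ → ℂ → ℂ)
    (hTm1 : ∀ v, T (-1) v = 0)
    (hT0 : ∀ v, T 0 v ≠ 0)
    (hTsys : ∀ n : ℤ, 0 ≤ n → ∀ v : ℂ,
      T n (v + Complex.I) * T n (v - Complex.I)
        = T (n + 1) v * T (n - 1) v +
          T 0 (v + Complex.I * ((n : ℂ) + 1)) * T 0 (v - Complex.I * ((n : ℂ) + 1)))
    (Y : ℤ → ℂ → ℂ)
    (hY : ∀ j : ℤ, ∀ v : ℂ, Y j v =
      T (j + 1) v * T (j - 1) v /
        (T 0 (v + Complex.I * ((j : ℂ) + 1)) * T 0 (v - Complex.I * ((j : ℂ) + 1)))) :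
    ∀ j : ℤ, 1 ≤ j → ∀ v : ℂ,
      (1 + Y j v =
        T j (v + Complex.I) * T j (v - Complex.I) /
          (T 0 (v + Complex.I * ((j : ℂ) + 1)) * T 0 (v - Complex.I * ((j : ℂ) + 1)))) ∧
      Y j (v + Complex.I) * Y j (v - Complex.I)
        = (1 + Y (j - 1) v) * (1 + Y (j + 1) v) := by
  have key : ∀ j : ℤ, 0 ≤ j → ∀ v : ℂ,
      1 + Y j v =
        T j (v + Complex.I) * T j (v - Complex.I) /
          (T 0 (v + Complex.I * ((j : ℂ) + 1)) * T 0 (v - Complex.I * ((j : ℂ) + 1))) := by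
    intro j hj v
    have h1 := hT0 (v + Complex.I * ((j : ℂ) + 1))
    have h2 := hT0 (v - Complex.I * ((j : ℂ) + 1))
    rw [hY, hTsys j hj v]
    field_simp
    ring
  intro j hj v
  refine ⟨key j (by omega) v, ?_⟩
  rw [hY j (v + Complex.I), hY j (v - Complex.I),
    key (j - 1) (by omega) v, key (j + 1) (by omega) v]
  push_cast
  have e1 : v + Complex.I + Complex.I * ((j : ℂ) + 1) = v + Complex.I * ((j : ℂ) + 2) := by ring
  have e2 : v + Complex.I - Complex.I * ((j : ℂ) + 1) = v - Complex.I * (j : ℂ) := by ring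
  have e3 : v - Complex.I + Complex.I * ((j : ℂ) + 1) = v + Complex.I * (j : ℂ) := by ring
  have e4 : v - Complex.I - Complex.I * ((j : ℂ) + 1) = v - Complex.I * ((j : ℂ) + 2) := by ring
  have e5 : v + Complex.I * ((j : ℂ) - 1 + 1) = v + Complex.I * (j : ℂ) := by ring
  have e6 : v - Complex.I * ((j : ℂ) - 1 + 1) = v - Complex.I * (j : ℂ) := by ring
  have e7 : v + Complex.I * ((j : ℂ) + 1 + 1) = v + Complex.I * ((j : ℂ) + 2) := by ring
  have e8 : v - Complex.I * ((j : ℂ) + 1 + 1) = v - Complex.I * ((j : ℂ) + 2) := by ring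
  rw [e1, e2, e3, e4, e5, e6, e7, e8]
  have h1 := hT0 (v + Complex.I * (j : ℂ))
  have h2 := hT0 (v - Complex.I * (j : ℂ))
  have h3 := hT0 (v + Complex.I * ((j : ℂ) + 2))
  have h4 := hT0 (v - Complex.I * ((j : ℂ) + 2))
  field_simp
end

section
/- If T_{p₀}(v) = T_{p₀−2}(v) + 2(−1)^m T₀(v + i p₀) with T₀(v + 2ip₀) = T₀(v), and K(v) = (−1)^m T_{p₀−2}(v)/T₀(v+ip₀), then 1 + Y_{p₀−1}(v) = (1 + K(v))² and K(v+i)K(v−i) = 1 + Y_{p₀−2}(v). -/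
/-- Let `p₀ ≥ 3` be an integer and let `T n : ℂ → ℂ` (`n ≥ -1`) satisfy
`T (-1) = 0`, the T-system
`T n (v+i) T n (v-i) = T (n+1) v ⬝ T (n-1) v + T 0 (v+i(n+1)) T 0 (v-i(n+1))`,
the truncation identity `T p₀ v = T (p₀-2) v + 2 (-1)^m T 0 (v + i p₀)` and the
periodicity `T 0 (v + 2 i p₀) = T 0 v`, with `T 0` nowhere zero.  With
`Y j v = T (j+1) v ⬝ T (j-1) v / (T 0 (v+i(j+1)) T 0 (v-i(j+1)))` and
`K v = (-1)^m T (p₀-2) v / T 0 (v + i p₀)`, the Y-system closes: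
`1 + Y (p₀-1) v = (1 + K v)²` and `K (v+i) K (v-i) = 1 + Y (p₀-2) v`. -/
theorem stmt_17 (p₀ : ℕ) (hp₀ : 3 ≤ p₀) (m : ℕ) (T : ℤ → ℂ → ℂ)
    (hTm1 : ∀ v, T (-1) v = 0)
    (hT0 : ∀ v, T 0 v ≠ 0)
    (hTsys : ∀ n : ℤ, 0 ≤ n → ∀ v : ℂ,
      T n (v + Complex.I) * T n (v - Complex.I)
        = T (n + 1) v * T (n - 1) v +
          T 0 (v + Complex.I * ((n : ℂ) + 1)) * T 0 (v - Complex.I * ((n : ℂ) + 1)))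
    (htrunc : ∀ v : ℂ, T (p₀ : ℤ) v =
      T ((p₀ : ℤ) - 2) v + 2 * (-1 : ℂ) ^ m * T 0 (v + Complex.I * (p₀ : ℂ)))
    (hper : ∀ v : ℂ, T 0 (v + 2 * Complex.I * (p₀ : ℂ)) = T 0 v)
    (Y : ℤ → ℂ → ℂ)
    (hY : ∀ j : ℤ, ∀ v : ℂ, Y j v =
      T (j + 1) v * T (j - 1) v /
        (T 0 (v + Complex.I * ((j : ℂ) + 1)) * T 0 (v - Complex.I * ((j : ℂ) + 1))))
    (K : ℂ → ℂ)
    (hK : ∀ v : ℂ, K v =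
      (-1 : ℂ) ^ m * T ((p₀ : ℤ) - 2) v / T 0 (v + Complex.I * (p₀ : ℂ))) :
    ∀ v : ℂ,
      (1 + Y ((p₀ : ℤ) - 1) v = (1 + K v) ^ 2) ∧
      K (v + Complex.I) * K (v - Complex.I) = 1 + Y ((p₀ : ℤ) - 2) v := by
  intro v
  have targ : ∀ a b : ℂ, a = b → T 0 a = T 0 b := fun a b h => by rw [h]
  have hε2 : ((-1 : ℂ) ^ m) ^ 2 = 1 := by
    rw [← pow_mul, mul_comm, pow_mul]; norm_num
  have hA : T 0 (v - Complex.I * (p₀ : ℂ)) = T 0 (v + Complex.I * (p₀ : ℂ)) := by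
    rw [← hper (v - Complex.I * (p₀ : ℂ))]
    exact targ _ _ (by ring)
  constructor
  · have h1 := hY ((p₀ : ℤ) - 1) v
    have e1 : (p₀ : ℤ) - 1 + 1 = (p₀ : ℤ) := by ring
    have e2 : (p₀ : ℤ) - 1 - 1 = (p₀ : ℤ) - 2 := by ring
    rw [e1, e2] at h1
    have a1 : v + Complex.I * ((((p₀ : ℤ) - 1 : ℤ) : ℂ) + 1) = v + Complex.I * (p₀ : ℂ) := by
      push_cast; ring
    have a2 : v - Complex.I * ((((p₀ : ℤ) - 1 : ℤ) : ℂ) + 1) = v - Complex.I * (p₀ : ℂ) := by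
      push_cast; ring
    rw [targ _ _ a1, targ _ _ a2, hA, htrunc v] at h1
    rw [h1, hK v]
    have hne := hT0 (v + Complex.I * (p₀ : ℂ))
    field_simp
    linear_combination (-(T ((p₀ : ℤ) - 2) v) ^ 2) * hε2
  · have hn : (0 : ℤ) ≤ (p₀ : ℤ) - 2 := by omega
    have hsys := hTsys ((p₀ : ℤ) - 2) hn v
    have e1 : (p₀ : ℤ) - 2 + 1 = (p₀ : ℤ) - 1 := by ring
    have e2 : (p₀ : ℤ) - 2 - 1 = (p₀ : ℤ) - 3 := by ring
    rw [e1, e2] at hsys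
    have hYv := hY ((p₀ : ℤ) - 2) v
    have e3 : (p₀ : ℤ) - 2 + 1 = (p₀ : ℤ) - 1 := by ring
    have e4 : (p₀ : ℤ) - 2 - 1 = (p₀ : ℤ) - 3 := by ring
    rw [e3, e4] at hYv
    -- arguments
    have b1 : v + Complex.I * ((((p₀ : ℤ) - 2 : ℤ) : ℂ) + 1) = v + Complex.I * ((p₀ : ℂ) - 1) := by
      push_cast; ring
    have b2 : v - Complex.I * ((((p₀ : ℤ) - 2 : ℤ) : ℂ) + 1) = v - Complex.I * ((p₀ : ℂ) - 1) := by
      push_cast; ring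
    rw [targ _ _ b1, targ _ _ b2] at hsys hYv
    -- K arguments
    have c1 : (v + Complex.I) + Complex.I * (p₀ : ℂ) = v + Complex.I * ((p₀ : ℂ) + 1) := by ring
    have c2 : (v - Complex.I) + Complex.I * (p₀ : ℂ) = v + Complex.I * ((p₀ : ℂ) - 1) := by ring
    have hper2 : T 0 (v + Complex.I * ((p₀ : ℂ) + 1)) = T 0 (v - Complex.I * ((p₀ : ℂ) - 1)) := by
      rw [← hper (v - Complex.I * ((p₀ : ℂ) - 1))]
      exact targ _ _ (by ring)
    have hKp := hK (v + Complex.I)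
    have hKm := hK (v - Complex.I)
    rw [targ _ _ c1, hper2] at hKp
    rw [targ _ _ c2] at hKm
    rw [hKp, hKm, hYv]
    have h1 := hT0 (v - Complex.I * ((p₀ : ℂ) - 1))
    have h2 := hT0 (v + Complex.I * ((p₀ : ℂ) - 1))
    field_simp
    linear_combination hsys + (T ((p₀ : ℤ) - 2) (v + Complex.I) * T ((p₀ : ℤ) - 2) (v - Complex.I)) * hε2
end
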